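/- arXiv:1604.02992 — 4 statements merged into one kernel-verified Lean document; each statement's English description precedes it below -/
import Mathlib

section
/- Let x ≥ 0, ε > 0, and let M be a natural number with M ≥ (e+1)x + log(1/ε) − 1. Then ∑_{i=M+1}^∞ x^i/i! ≤ ε. -/
/-!
With `N = M + 1`, the inequality `(N + i)! ≥ N! i!` bounds the tail termwise by `x^N / N!` times the
exponential series, i.e. by `x^N / N! · e^x`. Stirling's lower bound `N! ≥ (N/e)^N` turns this into
`(e x / N)^N · e^x`, and `y ≤ e^(y-1)` into `exp((e + 1) x - N)`, which is at most `ε` by the choice of `M`.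
-/

open Real
open scoped Nat

lemma pow_add_div_factorial_le {x : ℝ} (hx : 0 ≤ x) (n i : ℕ) :
    x ^ (n + i) / (n + i)! ≤ x ^ n / n ! * (x ^ i / i !) := by
  rw [pow_add, div_mul_div_comm]
  gcongr
  exact_mod_cast Nat.le_of_dvd (by positivity) (Nat.factorial_mul_factorial_dvd_factorial_add n i)

lemma tsum_pow_add_div_factorial_le {x : ℝ} (hx : 0 ≤ x) (n : ℕ) :
    ∑' i : ℕ, x ^ (n + i) / (n + i)! ≤ x ^ n / n ! * exp x := by
  have hexp : Summable fun i : ℕ => x ^ i / i ! := summable_pow_div_factorial x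
  have htail : Summable fun i : ℕ => x ^ (n + i) / (n + i)! := by
    simpa only [add_comm n] using (summable_nat_add_iff n).2 hexp
  rw [exp_eq_exp_ℝ, NormedSpace.exp_eq_tsum_div, ← hexp.tsum_mul_left]
  exact htail.tsum_le_tsum (pow_add_div_factorial_le hx n) (hexp.mul_left _)

lemma div_exp_one_pow_le_factorial (n : ℕ) : ((n : ℝ) / exp 1) ^ n ≤ n ! := by
  rw [div_pow, ← exp_nat_mul, mul_one, div_le_iff₀ (exp_pos _),
    ← div_le_iff₀' (by positivity)]
  exact pow_div_factorial_le_exp (n : ℝ) n.cast_nonneg n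

lemma pow_div_factorial_le {x : ℝ} (hx : 0 ≤ x) {n : ℕ} (hn : n ≠ 0) :
    x ^ n / n ! ≤ (exp 1 * x / n) ^ n := by
  calc x ^ n / n ! ≤ x ^ n / ((n : ℝ) / exp 1) ^ n := by
        gcongr; exact div_exp_one_pow_le_factorial n
    _ = (exp 1 * x / n) ^ n := by rw [← div_pow]; congr 1; field_simp

lemma pow_le_exp_mul_sub_one {y : ℝ} (hy : 0 ≤ y) (n : ℕ) : y ^ n ≤ exp (n * (y - 1)) := by
  rw [exp_nat_mul]
  gcongr
  linarith [add_one_le_exp (y - 1)]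

theorem exp_tail_le_eps (x ε : ℝ) (M : ℕ) (hx : 0 ≤ x) (hε : 0 < ε)
    (hM : (Real.exp 1 + 1) * x + Real.log (1 / ε) - 1 ≤ (M : ℝ)) :
    (∑' i : ℕ, x ^ (M + 1 + i) / (Nat.factorial (M + 1 + i))) ≤ ε := by
  set N := M + 1 with hN
  have hN0 : (N : ℝ) ≠ 0 := by positivity
  calc ∑' i : ℕ, x ^ (N + i) / (N + i)! ≤ x ^ N / N ! * exp x :=
        tsum_pow_add_div_factorial_le hx N
    _ ≤ (exp 1 * x / N) ^ N * exp x := by gcongr; exact pow_div_factorial_le hx M.succ_ne_zero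
    _ ≤ exp (N * (exp 1 * x / N - 1)) * exp x := by
        gcongr; exact pow_le_exp_mul_sub_one (by positivity) N
    _ = exp ((exp 1 + 1) * x - N) := by rw [← exp_add]; congr 1; field_simp; ring
    _ ≤ exp (log ε) := by
        rw [one_div, log_inv] at hM
        gcongr
        push_cast [hN]
        linarith
    _ = ε := exp_log hε
end

section
/- Grönwall inequality with two-variable kernel: Let J = [α, β], let u : J → ℝ be continuous, let g(t,s) be continuous and nonnegative on the triangle α ≤ s ≤ t ≤ β and nondecreasing in t for each fixed s, and let n : J → ℝ be positive, continuous, and nondecreasing. If u(t) ≤ n(t) + ∫_α^t g(t,s) u(s) ds for all t ∈ J, then u(t) ≤ n(t) · exp(∫_α^t g(t,s) ds) for all t ∈ J. -/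
/-!
Fix `T`. Since `g` is nonnegative and nondecreasing in its first variable and `n` is positive and
nondecreasing, the positive part `u⁺` satisfies, for `α ≤ t ≤ T`, the inequality
`u⁺ t ≤ n T + ∫ s in α..t, g T s * u⁺ s` with the kernel frozen at time `T`. The classical
Grönwall inequality for the one-variable kernel `g T ·` and the constant `n T`, evaluated at `t = T`,
then gives the claim.
-/

open Set intervalIntegral

section Primitive

variable {E : Type*} [NormedAddCommGroup E] [NormedSpace ℝ E]

theorem hasDerivAt_integral_of_continuousOn_Icc [CompleteSpace E] {f : ℝ → E} {a b t : ℝ}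
    (hf : ContinuousOn f (Icc a b)) (ht : t ∈ Ioo a b) :
    HasDerivAt (fun x => ∫ s in a..x, f s) (f t) t :=
  integral_hasDerivAt_right
    ((hf.mono (Icc_subset_Icc le_rfl ht.2.le)).intervalIntegrable_of_Icc ht.1.le)
    ((hf.mono Ioo_subset_Icc_self).stronglyMeasurableAtFilter isOpen_Ioo t ht)
    (hf.continuousAt (Icc_mem_nhds ht.1 ht.2))

theorem continuousOn_integral_of_continuousOn_Icc {f : ℝ → E} {a b : ℝ} (hab : a ≤ b)
    (hf : ContinuousOn f (Icc a b)) :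
    ContinuousOn (fun x => ∫ s in a..x, f s) (Icc a b) := by
  rw [← uIcc_of_le hab] at hf ⊢
  exact continuousOn_primitive_interval (hf.integrableOn_compact isCompact_uIcc)

end Primitive

theorem le_mul_exp_integral_of_le_add_integral {φ k : ℝ → ℝ} {a b C : ℝ}
    (hφ : ContinuousOn φ (Icc a b)) (hk : ContinuousOn k (Icc a b))
    (hk_nonneg : ∀ s ∈ Icc a b, 0 ≤ k s)
    (h : ∀ t ∈ Icc a b, φ t ≤ C + ∫ s in a..t, k s * φ s) :
    ∀ t ∈ Icc a b, φ t ≤ C * Real.exp (∫ s in a..t, k s) := by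
  intro t ht
  have hab : a ≤ b := ht.1.trans ht.2
  set V : ℝ → ℝ := fun t => ∫ s in a..t, k s * φ s
  set K : ℝ → ℝ := fun t => ∫ s in a..t, k s
  -- `(C + V) * exp (-K)` is nonincreasing because its derivative is `k * (φ - (C + V)) * exp (-K)`.
  set F : ℝ → ℝ := fun t => (C + V t) * Real.exp (-K t)
  have hF_deriv : ∀ x ∈ Ioo a b, HasDerivAt F
      (k x * φ x * Real.exp (-K x) + (C + V x) * (Real.exp (-K x) * -k x)) x := fun x hx =>
    ((hasDerivAt_integral_of_continuousOn_Icc (hk.mul hφ) hx).const_add C).mul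
      (hasDerivAt_integral_of_continuousOn_Icc hk hx).neg.exp
  have hF_cont : ContinuousOn F (Icc a b) :=
    ((continuousOn_integral_of_continuousOn_Icc hab (hk.mul hφ)).const_add C).mul
      (continuousOn_integral_of_continuousOn_Icc hab hk).neg.rexp
  have hF_anti : AntitoneOn F (Icc a b) := by
    refine antitoneOn_of_deriv_nonpos (convex_Icc a b) hF_cont ?_ ?_ <;> rw [interior_Icc]
    · exact fun x hx => (hF_deriv x hx).differentiableAt.differentiableWithinAt
    · intro x hx
      rw [(hF_deriv x hx).deriv]
      have hφx := h x (Ioo_subset_Icc_self hx)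
      have hkx := hk_nonneg x (Ioo_subset_Icc_self hx)
      have := Real.exp_pos (-K x)
      nlinarith [mul_le_mul_of_nonneg_left hφx hkx]
  have hFt : F t ≤ C := by
    simpa [F, V, K] using hF_anti (left_mem_Icc.2 hab) ht ht.1
  calc φ t ≤ C + V t := h t ht
    _ = F t * Real.exp (K t) := by simp only [F, mul_assoc, ← Real.exp_add, neg_add_cancel,
        Real.exp_zero, mul_one]
    _ ≤ C * Real.exp (K t) := by gcongr

theorem integral_mul_le_integral_mul_max_zero {k₁ k₂ u : ℝ → ℝ} {a b : ℝ} (hab : a ≤ b)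
    (hk₁ : ContinuousOn k₁ (Icc a b)) (hk₂ : ContinuousOn k₂ (Icc a b))
    (hu : ContinuousOn u (Icc a b)) (hk₁_nonneg : ∀ s ∈ Icc a b, 0 ≤ k₁ s)
    (hk : ∀ s ∈ Icc a b, k₁ s ≤ k₂ s) :
    ∫ s in a..b, k₁ s * u s ≤ ∫ s in a..b, k₂ s * max (u s) 0 := by
  refine integral_mono_on hab ((hk₁.mul hu).intervalIntegrable_of_Icc hab)
    ((hk₂.mul (hu.sup continuousOn_const)).intervalIntegrable_of_Icc hab) fun s hs => ?_
  calc k₁ s * u s ≤ k₁ s * max (u s) 0 := by gcongr; exacts [hk₁_nonneg s hs, le_max_left _ _]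
    _ ≤ k₂ s * max (u s) 0 := by gcongr; exact hk s hs

theorem gronwall_two_variable_kernel_general (α β : ℝ)
    (u n : ℝ → ℝ) (g : ℝ → ℝ → ℝ)
    (hu : ContinuousOn u (Set.Icc α β))
    (hg_cont : ContinuousOn (fun p : ℝ × ℝ => g p.1 p.2)
      {p : ℝ × ℝ | α ≤ p.2 ∧ p.2 ≤ p.1 ∧ p.1 ≤ β})
    (hg_nonneg : ∀ t s, α ≤ s → s ≤ t → t ≤ β → 0 ≤ g t s)
    (hg_mono : ∀ s t₁ t₂, α ≤ s → s ≤ t₁ → t₁ ≤ t₂ → t₂ ≤ β → g t₁ s ≤ g t₂ s)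
    (hn_pos : ∀ t ∈ Set.Icc α β, 0 < n t)
    (hn_mono : ∀ t₁ ∈ Set.Icc α β, ∀ t₂ ∈ Set.Icc α β, t₁ ≤ t₂ → n t₁ ≤ n t₂)
    (hineq : ∀ t ∈ Set.Icc α β, u t ≤ n t + ∫ s in α..t, g t s * u s) :
    ∀ t ∈ Set.Icc α β, u t ≤ n t * Real.exp (∫ s in α..t, g t s) := by
  intro T ⟨hαT, hTβ⟩
  have hg_section : ∀ t ≤ β, ContinuousOn (g t) (Icc α t) := fun t ht =>
    hg_cont.comp (by fun_prop : Continuous fun s => (t, s)).continuousOn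
      fun s hs => ⟨hs.1, hs.2, ht⟩
  have hu_T : ContinuousOn u (Icc α T) := hu.mono (Icc_subset_Icc_right hTβ)
  have hg_T_nonneg : ∀ s ∈ Icc α T, 0 ≤ g T s := fun s hs => hg_nonneg T s hs.1 hs.2 hTβ
  have h_frozen : ∀ t ∈ Icc α T, max (u t) 0 ≤ n T + ∫ s in α..t, g T s * max (u s) 0 := by
    intro t ⟨hαt, htT⟩
    have htβ : t ≤ β := htT.trans hTβ
    have h_int_nonneg : 0 ≤ ∫ s in α..t, g T s * max (u s) 0 := integral_nonneg hαt
      fun s hs => mul_nonneg (hg_T_nonneg s ⟨hs.1, hs.2.trans htT⟩) (le_max_right _ _)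
    refine max_le ?_ (add_nonneg (hn_pos T ⟨hαT, hTβ⟩).le h_int_nonneg)
    calc u t ≤ n t + ∫ s in α..t, g t s * u s := hineq t ⟨hαt, htβ⟩
      _ ≤ n T + ∫ s in α..t, g T s * max (u s) 0 := by
        gcongr ?_ + ?_
        · exact hn_mono t ⟨hαt, htβ⟩ T ⟨hαT, hTβ⟩ htT
        · exact integral_mul_le_integral_mul_max_zero hαt (hg_section t htβ)
            ((hg_section T hTβ).mono (Icc_subset_Icc_right htT))
            (hu_T.mono (Icc_subset_Icc_right htT))
            (fun s hs => hg_nonneg t s hs.1 hs.2 htβ)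
            (fun s hs => hg_mono s t T hs.1 hs.2 htT hTβ)
  exact (le_max_left _ _).trans <| le_mul_exp_integral_of_le_add_integral
    (hu_T.sup continuousOn_const) (hg_section T hTβ) hg_T_nonneg h_frozen T (right_mem_Icc.2 hαT)

theorem gronwall_two_variable_kernel (α β : ℝ) (hαβ : α ≤ β)
    (u n : ℝ → ℝ) (g : ℝ → ℝ → ℝ)
    (hu : ContinuousOn u (Set.Icc α β))
    (hg_cont : ContinuousOn (fun p : ℝ × ℝ => g p.1 p.2)
      {p : ℝ × ℝ | α ≤ p.2 ∧ p.2 ≤ p.1 ∧ p.1 ≤ β})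
    (hg_nonneg : ∀ t s, α ≤ s → s ≤ t → t ≤ β → 0 ≤ g t s)
    (hg_mono : ∀ s t₁ t₂, α ≤ s → s ≤ t₁ → t₁ ≤ t₂ → t₂ ≤ β → g t₁ s ≤ g t₂ s)
    (hn_pos : ∀ t ∈ Set.Icc α β, 0 < n t)
    (hn_cont : ContinuousOn n (Set.Icc α β))
    (hn_mono : ∀ t₁ ∈ Set.Icc α β, ∀ t₂ ∈ Set.Icc α β, t₁ ≤ t₂ → n t₁ ≤ n t₂)
    (hineq : ∀ t ∈ Set.Icc α β, u t ≤ n t + ∫ s in α..t, g t s * u s) :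
    ∀ t ∈ Set.Icc α β, u t ≤ n t * Real.exp (∫ s in α..t, g t s) :=
  gronwall_two_variable_kernel_general α β u n g hu hg_cont hg_nonneg hg_mono hn_pos hn_mono hineq
end

section
/- Truncation error bound: Suppose real-valued functions u_n : [0,∞) → ℝ satisfy u_0(t) ≤ e^{cyt} − 1 and u_n(t) ≤ c y ∫_0^t u_{n−1}(s) ds for all n ≥ 1 and t ≥ 0, with c, y ≥ 0 and each u_n nonnegative and continuous. Then for any ε ∈ (0,1] and any natural M with M ≥ (e+1)cyt + log(1/ε) − 1, one has u_M(t) ≤ ε. -/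
open intervalIntegral
open scoped Nat

/-!
Induction on `n` gives `u n t ≤ exp (k t) (k t)^(n+1) / (n+1)!` with `k = c y`: the base case is
`exp x - 1 ≤ x exp x`, and each integration raises the power of `k t` by one after bounding
`exp (k s)` by `exp (k t)` on `[0, t]`. Comparing `x^n / n!` with a single term of the series of
`exp (e x)` gives `x^n / n! ≤ exp (e x - n)`, so `u M t ≤ exp ((e + 1) x - (M + 1)) ≤ ε`.
-/

lemma exp_sub_one_le_mul_exp (x : ℝ) : Real.exp x - 1 ≤ x * Real.exp x := by
  have h := mul_le_mul_of_nonneg_left (Real.one_sub_le_exp_neg x) (Real.exp_pos x).le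
  rw [mul_comm, sub_mul, one_mul, ← Real.exp_add, add_neg_cancel, Real.exp_zero] at h
  linarith

lemma pow_div_factorial_le_exp_mul_sub {x : ℝ} (hx : 0 ≤ x) (n : ℕ) :
    x ^ n / n ! ≤ Real.exp (Real.exp 1 * x - n) := by
  have h := Real.pow_div_factorial_le_exp _ (mul_nonneg (Real.exp_pos 1).le hx) n
  rw [mul_pow, ← Real.exp_nat_mul, mul_one, mul_div_assoc,
    ← le_div_iff₀' (Real.exp_pos _)] at h
  rwa [Real.exp_sub]

lemma integral_mul_pow (k t : ℝ) (m : ℕ) :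
    ∫ s in (0:ℝ)..t, (k * s) ^ m = k ^ m * t ^ (m + 1) / (m + 1) := by
  simp_rw [mul_pow]
  rw [integral_const_mul, integral_pow, zero_pow m.succ_ne_zero, sub_zero, mul_div_assoc]

lemma mul_integral_le_exp_mul_pow_div_factorial {k t : ℝ} (hk : 0 ≤ k) (ht : 0 ≤ t)
    {f : ℝ → ℝ} (hf : ContinuousOn f (Set.Icc 0 t)) {n : ℕ}
    (hfle : ∀ s ∈ Set.Icc 0 t, f s ≤ Real.exp (k * s) * (k * s) ^ n / n !) :
    k * ∫ s in (0:ℝ)..t, f s ≤ Real.exp (k * t) * (k * t) ^ (n + 1) / (n + 1)! := by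
  have hf_int : IntervalIntegrable f MeasureTheory.volume 0 t :=
    (hf.mono (Set.uIcc_of_le ht).le).intervalIntegrable
  have hg_int : IntervalIntegrable (fun s => Real.exp (k * t) / n ! * (k * s) ^ n)
      MeasureTheory.volume 0 t := (by fun_prop : Continuous _).intervalIntegrable 0 t
  have hle : ∫ s in (0:ℝ)..t, f s ≤ ∫ s in (0:ℝ)..t, Real.exp (k * t) / n ! * (k * s) ^ n := by
    refine integral_mono_on ht hf_int hg_int fun s hs => (hfle s hs).trans ?_
    have hexp : Real.exp (k * s) ≤ Real.exp (k * t) :=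
      Real.exp_le_exp.mpr (mul_le_mul_of_nonneg_left hs.2 hk)
    rw [div_mul_eq_mul_div]
    have := mul_nonneg hk hs.1
    gcongr
  calc k * ∫ s in (0:ℝ)..t, f s
      ≤ k * ∫ s in (0:ℝ)..t, Real.exp (k * t) / n ! * (k * s) ^ n :=
        mul_le_mul_of_nonneg_left hle hk
    _ = Real.exp (k * t) * (k * t) ^ (n + 1) / (n + 1)! := by
        rw [integral_const_mul, integral_mul_pow, Nat.factorial_succ]
        push_cast
        field_simp
        ring

theorem le_exp_mul_pow_div_factorial_of_le_mul_integral {k : ℝ} (hk : 0 ≤ k)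
    {u : ℕ → ℝ → ℝ} (hu_cont : ∀ n, ContinuousOn (u n) (Set.Ici 0))
    (hu0 : ∀ t, 0 ≤ t → u 0 t ≤ Real.exp (k * t) - 1)
    (hun : ∀ n t, 0 ≤ t → u (n + 1) t ≤ k * ∫ s in (0:ℝ)..t, u n s) (n : ℕ) {t : ℝ}
    (ht : 0 ≤ t) : u n t ≤ Real.exp (k * t) * (k * t) ^ (n + 1) / (n + 1)! := by
  induction n generalizing t with
  | zero =>
    simpa [mul_comm] using (hu0 t ht).trans (exp_sub_one_le_mul_exp (k * t))
  | succ n ih =>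
    exact (hun n t ht).trans <| mul_integral_le_exp_mul_pow_div_factorial hk ht
      ((hu_cont n).mono Set.Icc_subset_Ici_self) fun s hs => ih hs.1

theorem truncation_error_bound_general (c y : ℝ) (hc : 0 ≤ c) (hy : 0 ≤ y)
    (u : ℕ → ℝ → ℝ)
    (hu_cont : ∀ n, ContinuousOn (u n) (Set.Ici 0))
    (hu0 : ∀ t, 0 ≤ t → u 0 t ≤ Real.exp (c * y * t) - 1)
    (hun : ∀ n t, 0 ≤ t → u (n + 1) t ≤ c * y * ∫ s in (0:ℝ)..t, u n s)
    (ε : ℝ) (hε0 : 0 < ε) (M : ℕ) (t : ℝ) (ht : 0 ≤ t)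
    (hM : (Real.exp 1 + 1) * (c * y * t) + Real.log (1 / ε) - 1 ≤ (M : ℝ)) :
    u M t ≤ ε := by
  have hk : 0 ≤ c * y := mul_nonneg hc hy
  set x := c * y * t
  have hx : 0 ≤ x := mul_nonneg hk ht
  have hexponent : (Real.exp 1 + 1) * x - ↑(M + 1) ≤ Real.log ε := by
    rw [one_div, Real.log_inv] at hM
    push_cast
    linarith
  calc u M t ≤ Real.exp x * (x ^ (M + 1) / (M + 1)!) := by
        rw [← mul_div_assoc]
        exact le_exp_mul_pow_div_factorial_of_le_mul_integral hk hu_cont hu0 hun M ht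
    _ ≤ Real.exp x * Real.exp (Real.exp 1 * x - ↑(M + 1)) := by
        gcongr
        exact pow_div_factorial_le_exp_mul_sub hx (M + 1)
    _ = Real.exp ((Real.exp 1 + 1) * x - ↑(M + 1)) := by rw [← Real.exp_add]; ring_nf
    _ ≤ ε := by
        rw [← Real.exp_log hε0]
        exact Real.exp_le_exp.mpr hexponent

theorem truncation_error_bound (c y : ℝ) (hc : 0 ≤ c) (hy : 0 ≤ y)
    (u : ℕ → ℝ → ℝ)
    (hu_nonneg : ∀ n t, 0 ≤ t → 0 ≤ u n t)
    (hu_cont : ∀ n, ContinuousOn (u n) (Set.Ici 0))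
    (hu0 : ∀ t, 0 ≤ t → u 0 t ≤ Real.exp (c * y * t) - 1)
    (hun : ∀ n t, 0 ≤ t → u (n + 1) t ≤ c * y * ∫ s in (0:ℝ)..t, u n s)
    (ε : ℝ) (hε0 : 0 < ε) (hε1 : ε ≤ 1) (M : ℕ) (t : ℝ) (ht : 0 ≤ t)
    (hM : (Real.exp 1 + 1) * (c * y * t) + Real.log (1 / ε) - 1 ≤ (M : ℝ)) :
    u M t ≤ ε :=
  truncation_error_bound_general c y hc hy u hu_cont hu0 hun ε hε0 M t ht hM
end

section
/- Existence of unitary decomposition of a Hermitian matrix: Let O be a Hermitian n×n complex matrix and γ > 0 such that every eigenvalue d of O satisfies |d − 1| ≤ γ ≤ 1 + d (in particular all eigenvalues are ≥ γ − 1 ≥ −1 and ‖O‖ ≤ 1 + γ). Then there exist unitary matrices U_a and U_b with O = U_a + γ·U_b. -/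
/-!
Diagonalize `O = V D V†`. Each eigenvalue `d` satisfies `|1 - γ| ≤ d ≤ 1 + γ`, so the unit circle
and the circle of radius `γ` about `d` meet in a point `a`; then `d = a + γ b` with `b = (d - a) / γ`
of modulus one. Doing this eigenvalue by eigenvalue and conjugating the diagonal matrices of the
`a`'s and `b`'s back by `V` gives the two unitaries.
-/

open Matrix

theorem RCLike.mem_unitary_of_norm_eq_one {𝕜 : Type*} [RCLike 𝕜] {z : 𝕜} (hz : ‖z‖ = 1) :
    z ∈ unitary 𝕜 := by
  rw [Unitary.mem_iff_star_mul_self, RCLike.star_def, RCLike.conj_mul, hz]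
  norm_num

theorem Matrix.diagonal_mem_unitaryGroup {n α : Type*} [Fintype n] [DecidableEq n] [CommRing α]
    [StarRing α] {c : n → α} (hc : ∀ i, c i ∈ unitary α) :
    diagonal c ∈ unitaryGroup n α := by
  rw [mem_unitaryGroup_iff, star_eq_conjTranspose, diagonal_conjTranspose, diagonal_mul_diagonal,
    ← diagonal_one]
  exact congrArg diagonal (funext fun i ↦ Unitary.mul_star_self_of_mem (hc i))

theorem Complex.exists_norm_eq_one_norm_sub_eq {d γ : ℝ} (h1 : |d - 1| ≤ γ) (h2 : γ ≤ 1 + d) :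
    ∃ a : ℂ, ‖a‖ = 1 ∧ ‖(d : ℂ) - a‖ = γ := by
  obtain ⟨hlo, hhi⟩ := abs_le.mp h1
  set x : ℝ := (1 + d ^ 2 - γ ^ 2) / (2 * d)
  -- for `d = 0` the hypotheses force `γ = 1`, so both sides vanish despite `x = 0` being junk
  have hx : 2 * d * x = 1 + d ^ 2 - γ ^ 2 := by
    rcases eq_or_ne d 0 with rfl | hd
    · nlinarith
    · exact mul_div_cancel₀ _ (mul_ne_zero two_ne_zero hd)
  -- `(2d)² (1 - x²) = (γ² - (d - 1)²) ((d + 1)² - γ²)`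
  have hx2 : x ^ 2 ≤ 1 := by
    have hA : 0 ≤ γ ^ 2 - (d - 1) ^ 2 := by nlinarith
    have hB : 0 ≤ (d + 1) ^ 2 - γ ^ 2 := by nlinarith
    rcases eq_or_ne d 0 with rfl | hd
    · simp [x]
    · nlinarith [mul_nonneg hA hB, sq_pos_of_ne_zero hd]
  have hy : Real.sqrt (1 - x ^ 2) ^ 2 = 1 - x ^ 2 := Real.sq_sqrt (by linarith)
  refine ⟨⟨x, Real.sqrt (1 - x ^ 2)⟩, ?_, ?_⟩
  · rw [← sq_eq_sq₀ (norm_nonneg _) zero_le_one, Complex.sq_norm, Complex.normSq_mk]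
    nlinarith
  · rw [← sq_eq_sq₀ (norm_nonneg _) (by linarith), Complex.sq_norm, Complex.normSq_apply]
    simp only [Complex.sub_re, Complex.sub_im, Complex.ofReal_re, Complex.ofReal_im]
    nlinarith

theorem Complex.exists_unitary_add_smul_unitary {d γ : ℝ} (hγ : 0 < γ) (h1 : |d - 1| ≤ γ)
    (h2 : γ ≤ 1 + d) : ∃ a b : ℂ, a ∈ unitary ℂ ∧ b ∈ unitary ℂ ∧ (d : ℂ) = a + (γ : ℂ) * b := by
  obtain ⟨a, ha, hda⟩ := exists_norm_eq_one_norm_sub_eq h1 h2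
  have hγ0 : (γ : ℂ) ≠ 0 := Complex.ofReal_ne_zero.mpr hγ.ne'
  refine ⟨a, (d - a) / γ, RCLike.mem_unitary_of_norm_eq_one ha,
    RCLike.mem_unitary_of_norm_eq_one ?_, by field_simp; ring⟩
  rw [norm_div, hda, Complex.norm_real, Real.norm_of_nonneg hγ.le, div_self hγ.ne']

theorem hermitian_unitary_decomposition {n : Type*} [Fintype n] [DecidableEq n]
    (O : Matrix n n ℂ) (hO : O.IsHermitian) (γ : ℝ) (hγ : 0 < γ)
    (heig : ∀ i, |hO.eigenvalues i - 1| ≤ γ ∧ γ ≤ 1 + hO.eigenvalues i) :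
    ∃ Ua Ub : Matrix n n ℂ, Ua ∈ Matrix.unitaryGroup n ℂ ∧
      Ub ∈ Matrix.unitaryGroup n ℂ ∧ O = Ua + (γ : ℂ) • Ub := by
  choose a b ha hb hab using fun i ↦
    Complex.exists_unitary_add_smul_unitary hγ (heig i).1 (heig i).2
  let φ := Unitary.conjStarAlgAut ℂ _ hO.eigenvectorUnitary
  refine ⟨φ (diagonal a), φ (diagonal b), Unitary.map_mem φ (diagonal_mem_unitaryGroup ha),
    Unitary.map_mem φ (diagonal_mem_unitaryGroup hb), ?_⟩
  have hD : diagonal (RCLike.ofReal ∘ hO.eigenvalues) = diagonal a + (γ : ℂ) • diagonal b := by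
    rw [← diagonal_smul, diagonal_add]
    exact congrArg diagonal (funext hab)
  rw [← map_smul, ← map_add, ← hD]
  exact hO.spectral_theorem
end
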